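/- For every p ≥ 1 and every odd h, the (p-1)-fold iterate of the Syracuse function satisfies f^(p-1)(2^p · h - 1) = 2 · 3^(p-1) · h - 1. -/
import Mathlib

/-- The Syracuse function: maps an odd number k to the odd part of 3k+1. -/
def syracuse (k : ℕ) : ℕ := (3 * k + 1) / 2 ^ (3 * k + 1).factorization 2

lemma syr_eq (k m : ℕ) (hm : Odd m) (h : 3 * k + 1 = 2 * m) : syracuse k = m := by
  have hm0 : m ≠ 0 := by rintro rfl; simp at hm
  have hfac : (2 * m).factorization 2 = 1 := by
    rw [Nat.factorization_mul two_ne_zero hm0]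
    have : m.factorization 2 = 0 := Nat.factorization_eq_zero_of_not_dvd (by
      simpa [Nat.odd_iff, Nat.two_dvd_ne_zero] using hm)
    simp [this, Nat.Prime.factorization_self Nat.prime_two]
  rw [syracuse, h, hfac, pow_one, Nat.mul_div_cancel_left _ two_pos]

lemma syr_step (p h : ℕ) (hp : 1 ≤ p) (hpos : 0 < h) :
    syracuse (2 ^ (p + 1) * h - 1) = 2 ^ p * (3 * h) - 1 := by
  have h1 : 1 ≤ 2 ^ (p + 1) * h := Nat.one_le_iff_ne_zero.2 (by positivity)
  have h2 : 1 ≤ 3 * 2 ^ p * h := Nat.one_le_iff_ne_zero.2 (by positivity)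
  apply syr_eq
  · have hdvd : 2 ∣ 2 ^ p * (3 * h) := Dvd.dvd.mul_right (dvd_pow_self 2 (by omega)) _
    rcases hdvd with ⟨c, hc⟩
    have : 1 ≤ 2 ^ p * (3 * h) := Nat.one_le_iff_ne_zero.2 (by positivity)
    rw [Nat.odd_iff]; omega
  · have : 3 * (2 ^ (p + 1) * h - 1) + 1 = 3 * (2 ^ (p + 1) * h) - 2 := by omega
    rw [this]
    have : 2 ^ (p + 1) = 2 * 2 ^ p := by ring
    rw [this]
    ring_nf
    omega

theorem stmt16 (p h : ℕ) (hp : 1 ≤ p) (hpos : 0 < h) (hh : Odd h) :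
    syracuse^[p - 1] (2 ^ p * h - 1) = 2 * 3 ^ (p - 1) * h - 1 := by
  induction p generalizing h with
  | zero => omega
  | succ p ih =>
    rcases Nat.eq_or_lt_of_le hp with h1 | h1
    · simp [← h1]
    · have hp' : 1 ≤ p := by omega
      have hstep := syr_step p h hp' hpos
      have : syracuse^[p + 1 - 1] (2 ^ (p + 1) * h - 1)
          = syracuse^[p - 1] (syracuse (2 ^ (p + 1) * h - 1)) := by
        have : p + 1 - 1 = (p - 1) + 1 := by omega
        rw [this, Function.iterate_succ_apply]
      rw [this, hstep, ih (3 * h) hp' (by positivity) (by rcases hh with ⟨k, rfl⟩; exact ⟨3 * k + 1, by ring⟩)]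
      have : 2 * 3 ^ (p - 1) * (3 * h) = 2 * 3 ^ p * h := by
        rcases Nat.exists_eq_add_of_le hp' with ⟨q, rfl⟩; simp [Nat.add_sub_cancel_left]; ring
      rw [this, Nat.add_sub_cancel]
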